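/- The function $F(x,y) = |x| \sinh^{-1}(y/x) + |y| \sinh^{-1}(x/y)$ satisfies $\frac{\partial^2 F}{\partial x \partial y}(x,y) = \frac{1}{\sqrt{x^2 + y^2}}$ for all $x \ne 0$, $y \ne 0$. -/

import Mathlib

/-! Differentiating `F(x, y) = |x| arsinh (y / x) + |y| arsinh (x / y)` in `y`, the two terms
`± x / √(x² + y²)` coming from the chain rule cancel, leaving `∂F/∂y = sign y · arsinh (x / y)`.
Since `d/dt arsinh (t / c) = sign c / √(c² + t²)`,
differentiating once more in `x` gives `sign y ² / √(x² + y²) = 1 / √(x² + y²)`. -/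

open Real

noncomputable def kernelAntideriv (x y : ℝ) : ℝ :=
  |x| * arsinh (y / x) + |y| * arsinh (x / y)

lemma Real.sqrt_one_add_div_sq (a : ℝ) {b : ℝ} (hb : b ≠ 0) :
    √(1 + (a / b) ^ 2) = √(b ^ 2 + a ^ 2) / |b| := by
  rw [← sqrt_sq_eq_abs, ← sqrt_div (by positivity)]
  congr 1
  field_simp

lemma sign_mul_sign_self {y : ℝ} (hy : y ≠ 0) : (SignType.sign y : ℝ) * SignType.sign y = 1 := by
  rw [← SignType.coe_mul, ← sign_mul, sign_pos (mul_self_pos.2 hy), SignType.coe_one]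

lemma hasDerivAt_arsinh_div_const (c t : ℝ) :
    HasDerivAt (fun t => arsinh (t / c)) (SignType.sign c / √(c ^ 2 + t ^ 2)) t := by
  rcases eq_or_ne c 0 with rfl | hc
  · simpa using hasDerivAt_const t (0 : ℝ)
  · refine ((hasDerivAt_id' t).div_const c).arsinh.congr_deriv ?_
    rw [sqrt_one_add_div_sq t hc, smul_eq_mul, ← self_mul_sign c]
    field_simp

lemma hasDerivAt_abs_mul_arsinh_const_div (a : ℝ) {s : ℝ} (hs : s ≠ 0) :
    HasDerivAt (fun s => |s| * arsinh (a / s))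
      (SignType.sign s * arsinh (a / s) - a / √(a ^ 2 + s ^ 2)) s := by
  have hq : HasDerivAt (fun s => a / s) (-a / s ^ 2) s := by
    simpa [div_eq_mul_inv, neg_div] using (hasDerivAt_inv hs).const_mul a
  refine ((hasDerivAt_abs hs).fun_mul hq.arsinh).congr_deriv ?_
  rw [sqrt_one_add_div_sq a hs, smul_eq_mul, add_comm (s ^ 2)]
  field_simp
  rw [sq_abs]
  ring

lemma deriv_kernelAntideriv_snd (x : ℝ) {y : ℝ} (hy : y ≠ 0) :
    deriv (kernelAntideriv x) y = SignType.sign y * arsinh (x / y) := by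
  have h : HasDerivAt (kernelAntideriv x) _ y :=
    ((hasDerivAt_arsinh_div_const x y).const_mul |x|).fun_add
      (hasDerivAt_abs_mul_arsinh_const_div x hy)
  rw [h.deriv, ← mul_div_assoc, abs_mul_sign]
  ring

theorem mixed_partial_kernel_antideriv_general (x y : ℝ) (hy : y ≠ 0) :
    deriv (fun x' : ℝ =>
        deriv (fun y' : ℝ => |x'| * Real.arsinh (y' / x') + |y'| * Real.arsinh (x' / y')) y) x
      = 1 / Real.sqrt (x ^ 2 + y ^ 2) := by
  change deriv (fun x' => deriv (kernelAntideriv x') y) x = _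
  rw [funext fun x' => deriv_kernelAntideriv_snd x' hy,
    ((hasDerivAt_arsinh_div_const y x).const_mul _).deriv, ← mul_div_assoc,
    sign_mul_sign_self hy, add_comm]

/-- The function `F(x,y) = |x| arsinh(y/x) + |y| arsinh(x/y)` satisfies
`∂²F/∂x∂y = 1/√(x² + y²)` for `x ≠ 0`, `y ≠ 0`. -/
theorem mixed_partial_kernel_antideriv (x y : ℝ) (hx : x ≠ 0) (hy : y ≠ 0) :
    deriv (fun x' : ℝ =>
        deriv (fun y' : ℝ => |x'| * Real.arsinh (y' / x') + |y'| * Real.arsinh (x' / y')) y) x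
      = 1 / Real.sqrt (x ^ 2 + y ^ 2) :=
  mixed_partial_kernel_antideriv_general x y hy
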